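/- arXiv:2402.09194 — 6 statements merged into one kernel-verified Lean document; each statement's English description precedes it below -/
import Mathlib

section
/- Let Δ ⊆ ℝⁿ be a nonempty convex set, let g, h : ℝⁿ → ℝ both be strongly convex with the same modulus ρ > 0, let w ∈ Δ, let u be a subgradient of h at w, and let y ∈ Δ be a minimizer of the function z ↦ g(z) − ⟨u, z⟩ over Δ. Then, with φ := g − h, one has φ(y) ≤ φ(w) − ρ·‖y − w‖². -/
open scoped RealInnerProductSpace

private lemma aux_limit (a b c : ℝ) (hc : 0 ≤ c)
    (H : ∀ t : ℝ, t ∈ Set.Ioo (0:ℝ) 1 → a ≤ b - (1 - t) * c) : a ≤ b - c := by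
  by_contra hlt
  push_neg at hlt
  set ε := a - (b - c) with hε
  have hεpos : 0 < ε := by linarith
  have hcpos : 0 < 2 * c + 1 := by linarith
  set t := min (1/2 : ℝ) (ε / (2 * c + 1)) with ht
  have ht0 : 0 < t := lt_min (by norm_num) (div_pos hεpos hcpos)
  have ht1 : t < 1 := lt_of_le_of_lt (min_le_left _ _) (by norm_num)
  have htc : t * c < ε := by
    have h1 : t ≤ ε / (2 * c + 1) := min_le_right _ _
    have : t * (2 * c + 1) ≤ ε := by
      rw [← div_mul_cancel₀ ε (ne_of_gt hcpos)]
      exact mul_le_mul_of_nonneg_right h1 (le_of_lt hcpos)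
    nlinarith
  have := H t ⟨ht0, ht1⟩
  nlinarith

/-- If `g, h` are strongly convex with the same modulus `ρ > 0`, `u` is a
subgradient of `h` at `w ∈ Δ`, and `y ∈ Δ` minimizes `z ↦ g z - ⟪u, z⟫` over the nonempty
convex set `Δ`, then with `φ := g - h` one has `φ y ≤ φ w - ρ‖y - w‖²`. -/
theorem stmt_1 {n : ℕ} (Δ : Set (EuclideanSpace ℝ (Fin n)))
    (hne : Δ.Nonempty) (hconv : Convex ℝ Δ)
    (g h : EuclideanSpace ℝ (Fin n) → ℝ) (ρ : ℝ) (hρ : 0 < ρ)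
    (hg : ∀ a b : EuclideanSpace ℝ (Fin n), ∀ t : ℝ, t ∈ Set.Ioo (0 : ℝ) 1 →
      g (t • a + (1 - t) • b) ≤ t * g a + (1 - t) * g b - ρ / 2 * t * (1 - t) * ‖a - b‖ ^ 2)
    (hh : ∀ a b : EuclideanSpace ℝ (Fin n), ∀ t : ℝ, t ∈ Set.Ioo (0 : ℝ) 1 →
      h (t • a + (1 - t) • b) ≤ t * h a + (1 - t) * h b - ρ / 2 * t * (1 - t) * ‖a - b‖ ^ 2)
    (w : EuclideanSpace ℝ (Fin n)) (hw : w ∈ Δ)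
    (u : EuclideanSpace ℝ (Fin n))
    (hu : ∀ z : EuclideanSpace ℝ (Fin n), h z ≥ h w + ⟪u, z - w⟫)
    (y : EuclideanSpace ℝ (Fin n)) (hy : y ∈ Δ)
    (hmin : ∀ z ∈ Δ, g y - ⟪u, y⟫ ≤ g z - ⟪u, z⟫) :
    (g y - h y) ≤ (g w - h w) - ρ * ‖y - w‖ ^ 2 := by
  have hnorm : ‖w - y‖ = ‖y - w‖ := norm_sub_rev _ _
  -- Step 1: g y - ⟪u,y⟫ ≤ g w - ⟪u,w⟫ - ρ/2 * ‖y-w‖²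
  have step1 : g y - ⟪u, y⟫ ≤ (g w - ⟪u, w⟫) - (ρ / 2 * ‖y - w‖ ^ 2) := by
    apply aux_limit _ _ _ (by positivity)
    intro t ht
    obtain ⟨ht0, ht1⟩ := ht
    set z := t • w + (1 - t) • y with hz
    have hzΔ : z ∈ Δ := hconv hw hy (le_of_lt ht0) (by linarith) (by ring)
    have h1 := hmin z hzΔ
    have h2 := hg w y t ⟨ht0, ht1⟩
    have h3 : ⟪u, z⟫ = t * ⟪u, w⟫ + (1 - t) * ⟪u, y⟫ := by
      rw [hz, inner_add_right, real_inner_smul_right, real_inner_smul_right]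
    rw [hnorm] at h2
    have key : t * (g y - ⟪u, y⟫) ≤ t * (g w - ⟪u, w⟫) - ρ / 2 * t * (1 - t) * ‖y - w‖ ^ 2 := by
      nlinarith
    have := mul_le_mul_of_nonneg_left key (le_of_lt (inv_pos.mpr ht0))
    rw [mul_sub, mul_sub, ← mul_assoc, ← mul_assoc, inv_mul_cancel₀ (ne_of_gt ht0)] at this
    have ht' : t⁻¹ * (ρ / 2 * t) = ρ / 2 := by field_simp
    nlinarith [this]
  -- Step 2: h y ≥ h w + ⟪u, y - w⟫ + ρ/2 * ‖y-w‖²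
  have step2 : h w + ⟪u, y - w⟫ ≤ h y - ρ / 2 * ‖y - w‖ ^ 2 := by
    apply aux_limit _ _ _ (by positivity)
    intro t ht
    obtain ⟨ht0, ht1⟩ := ht
    set z := t • y + (1 - t) • w with hz
    have h1 := hu z
    have h2 := hh y w t ⟨ht0, ht1⟩
    have h3 : ⟪u, z - w⟫ = t * ⟪u, y - w⟫ := by
      have : z - w = t • (y - w) := by
        rw [hz]; module
      rw [this, real_inner_smul_right]
    have key : t * (h w + ⟪u, y - w⟫) ≤ t * (h y - (1 - t) * (ρ / 2 * ‖y - w‖ ^ 2)) := by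
      nlinarith
    have h4 := mul_le_mul_of_nonneg_left key (le_of_lt (inv_pos.mpr ht0))
    rw [← mul_assoc, ← mul_assoc, inv_mul_cancel₀ (ne_of_gt ht0), one_mul, one_mul] at h4
    linarith
  have hexp : ⟪u, y - w⟫ = ⟪u, y⟫ - ⟪u, w⟫ := inner_sub_right _ _ _
  linarith
end

section
/- For every w ∈ ℝⁿ, the function a ↦ a + (1/α)·Σ_{j=1}^S p_j·min(wᵀx_j − a, 0) on ℝ is bounded above and attains its supremum at some a belonging to the finite set {wᵀx₁, …, wᵀx_S}; in particular the supremum defining CVaR_{X,α}(w) is finite and attained. -/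
open scoped RealInnerProductSpace

lemma stmt_10_aux {S : ℕ} (hS : 1 ≤ S) (c p : Fin S → ℝ) (hp : ∀ j, 0 < p j)
    (hps : ∑ j, p j = 1) {α : ℝ} (hα0 : 0 < α) (hα1 : α < 1) :
    ∃ j : Fin S, ∀ a : ℝ,
      a + (1 / α) * ∑ i, p i * min (c i - a) 0 ≤
      c j + (1 / α) * ∑ i, p i * min (c i - c j) 0 := by
  classical
  have key : ∀ a : ℝ, ∃ j : Fin S,
      a + (1 / α) * ∑ i, p i * min (c i - a) 0 ≤
      c j + (1 / α) * ∑ i, p i * min (c i - c j) 0 := by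
    intro a
    set T := Finset.univ.filter (fun i : Fin S => c i < a) with hT
    set q := ∑ i ∈ T, p i with hq
    have hα' : α ≠ 0 := ne_of_gt hα0
    have sum_eq : ∀ b : ℝ, (∀ i, c i < a → c i ≤ b) → (∀ i, a ≤ c i → b ≤ c i) →
        ∑ i, p i * min (c i - b) 0 = (∑ i ∈ T, p i * c i) - q * b := by
      intro b h1 h2
      rw [← Finset.sum_filter_add_sum_filter_not Finset.univ (fun i : Fin S => c i < a)]
      have e1 : ∑ i ∈ Finset.univ.filter (fun i : Fin S => ¬ c i < a),
          p i * min (c i - b) 0 = 0 := by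
        refine Finset.sum_eq_zero fun i hi => ?_
        have hi' : a ≤ c i := not_lt.mp (Finset.mem_filter.mp hi).2
        rw [min_eq_right (by linarith [h2 i hi'])]; ring
      have e2 : ∑ i ∈ Finset.univ.filter (fun i : Fin S => c i < a),
          p i * min (c i - b) 0 = ∑ i ∈ T, (p i * c i - p i * b) := by
        rw [← hT]
        refine Finset.sum_congr rfl fun i hi => ?_
        have hi' : c i < a := (Finset.mem_filter.mp hi).2
        rw [min_eq_left (by linarith [h1 i hi'])]; ring
      rw [e1, add_zero, e2, Finset.sum_sub_distrib, ← Finset.sum_mul, ← hq]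
    have hqa : ∑ i, p i * min (c i - a) 0 = (∑ i ∈ T, p i * c i) - q * a :=
      sum_eq a (fun i hi => le_of_lt hi) (fun i hi => hi)
    by_cases hcase : q ≤ α
    · -- take the smallest c i with a ≤ c i
      have hne : (Finset.univ.filter (fun i : Fin S => a ≤ c i)).Nonempty := by
        by_contra hE
        rw [Finset.not_nonempty_iff_eq_empty, Finset.filter_eq_empty_iff] at hE
        have hTu : T = Finset.univ := by
          apply Finset.eq_univ_iff_forall.mpr
          intro i
          exact Finset.mem_filter.mpr ⟨Finset.mem_univ i, not_le.mp (hE (Finset.mem_univ i))⟩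
        have : q = 1 := by rw [hq, hTu, hps]
        linarith
      obtain ⟨j, hjmem, hjmin⟩ := Finset.exists_min_image _ c hne
      have hja : a ≤ c j := (Finset.mem_filter.mp hjmem).2
      refine ⟨j, ?_⟩
      have hqb : ∑ i, p i * min (c i - c j) 0 = (∑ i ∈ T, p i * c i) - q * c j :=
        sum_eq (c j) (fun i hi => by linarith)
          (fun i hi => hjmin i (Finset.mem_filter.mpr ⟨Finset.mem_univ i, hi⟩))
      rw [hqa, hqb]
      have hprod : 0 ≤ (c j - a) * (α - q) :=
        mul_nonneg (by linarith) (by linarith)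
      have hexp : (c j + (1 / α) * ((∑ i ∈ T, p i * c i) - q * c j)) -
          (a + (1 / α) * ((∑ i ∈ T, p i * c i) - q * a)) =
          (1 / α) * ((c j - a) * (α - q)) := by field_simp; ring
      nlinarith [mul_nonneg (le_of_lt (one_div_pos.mpr hα0)) hprod]
    · -- take the largest c i with c i < a
      push_neg at hcase
      have hne : T.Nonempty := by
        by_contra hE
        rw [Finset.not_nonempty_iff_eq_empty] at hE
        have : q = 0 := by rw [hq, hE, Finset.sum_empty]
        linarith
      obtain ⟨j, hjmem, hjmax⟩ := Finset.exists_max_image T c hne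
      have hja : c j < a := (Finset.mem_filter.mp hjmem).2
      refine ⟨j, ?_⟩
      have hqb : ∑ i, p i * min (c i - c j) 0 = (∑ i ∈ T, p i * c i) - q * c j :=
        sum_eq (c j)
          (fun i hi => hjmax i (Finset.mem_filter.mpr ⟨Finset.mem_univ i, hi⟩))
          (fun i hi => by linarith)
      rw [hqa, hqb]
      have hprod : 0 ≤ (c j - a) * (α - q) :=
        by nlinarith
      have hexp : (c j + (1 / α) * ((∑ i ∈ T, p i * c i) - q * c j)) -
          (a + (1 / α) * ((∑ i ∈ T, p i * c i) - q * a)) =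
          (1 / α) * ((c j - a) * (α - q)) := by field_simp; ring
      nlinarith [mul_nonneg (le_of_lt (one_div_pos.mpr hα0)) hprod]
  -- take the j maximizing the objective over the finite set
  obtain ⟨j₀, -, hj₀⟩ := Finset.exists_max_image Finset.univ
    (fun j : Fin S => c j + (1 / α) * ∑ i, p i * min (c i - c j) 0)
    ⟨⟨0, hS⟩, Finset.mem_univ _⟩
  refine ⟨j₀, fun a => ?_⟩
  obtain ⟨j, hj⟩ := key a
  exact hj.trans (hj₀ j (Finset.mem_univ j))

/-- The discrete CVaR of portfolio `w` at level `β` for scenarios `x` with probabilities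
`p`: `CVaR_{X,β}(w) = sup_{a ∈ ℝ} ( a + (1/β)·Σⱼ pⱼ·min(wᵀxⱼ − a, 0) )`. -/
noncomputable def discreteCVaR {n S : ℕ} (x : Fin S → EuclideanSpace ℝ (Fin n))
    (p : Fin S → ℝ) (β : ℝ) (w : EuclideanSpace ℝ (Fin n)) : ℝ :=
  sSup (Set.range fun a : ℝ => a + (1 / β) * ∑ j, p j * min (⟪w, x j⟫ - a) 0)

/-- The Rockafellar–Uryasev objective is bounded above and attains its
supremum at some point of the finite set `{wᵀx₁, …, wᵀx_S}`; in particular the supremum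
defining the discrete CVaR is finite and attained. -/
theorem stmt_10 {n S : ℕ} (hS : 1 ≤ S)
    (x : Fin S → EuclideanSpace ℝ (Fin n)) (p : Fin S → ℝ)
    (hp : ∀ j, 0 < p j) (hps : ∑ j, p j = 1)
    (α : ℝ) (hα : α ∈ Set.Ioo (0 : ℝ) 1) (w : EuclideanSpace ℝ (Fin n)) :
    BddAbove (Set.range fun a : ℝ => a + (1 / α) * ∑ j, p j * min (⟪w, x j⟫ - a) 0) ∧
    ∃ j : Fin S,
      (∀ a : ℝ, a + (1 / α) * ∑ i, p i * min (⟪w, x i⟫ - a) 0 ≤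
        ⟪w, x j⟫ + (1 / α) * ∑ i, p i * min (⟪w, x i⟫ - ⟪w, x j⟫) 0) ∧
      discreteCVaR x p α w = ⟪w, x j⟫ + (1 / α) * ∑ i, p i * min (⟪w, x i⟫ - ⟪w, x j⟫) 0 := by
  obtain ⟨j, hj⟩ := stmt_10_aux hS (fun i => ⟪w, x i⟫) p hp hps hα.1 hα.2
  refine ⟨⟨⟪w, x j⟫ + (1 / α) * ∑ i, p i * min (⟪w, x i⟫ - ⟪w, x j⟫) 0, ?_⟩, j, hj, ?_⟩
  · rintro y ⟨a, rfl⟩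
    exact hj a
  · exact IsGreatest.csSup_eq ⟨⟨⟪w, x j⟫, rfl⟩, by rintro y ⟨a, rfl⟩; exact hj a⟩
end

section
/- Let w ∈ ℝⁿ and assume the scenarios are indexed so that wᵀx₁ ≤ wᵀx₂ ≤ … ≤ wᵀx_S. Let k be the largest integer in {0,…,S−1} with Σ_{j=1}^k p_j < α (the empty sum being 0) and set ε := α − Σ_{j=1}^k p_j. Then CVaR_{X,α}(w) = (1/α)·( Σ_{j=1}^k p_j·wᵀx_j + ε·wᵀx_{k+1} ). -/
open scoped RealInnerProductSpace

/-- If the scenarios are sorted in increasing order of `wᵀxⱼ`, `k` is the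
largest integer in `{0,…,S−1}` whose partial probability sum is `< α` and
`ε := α − Σ_{j<k} pⱼ`, then `CVaR_{X,α}(w) = (1/α)( Σ_{j<k} pⱼ·wᵀxⱼ + ε·wᵀx_{k+1} )`
(with the boundary scenario indexed by `k` in 0-based notation). -/
theorem stmt_11 {n S : ℕ} (hS : 1 ≤ S)
    (x : Fin S → EuclideanSpace ℝ (Fin n)) (p : Fin S → ℝ)
    (hp : ∀ j, 0 < p j) (hps : ∑ j, p j = 1)
    (α : ℝ) (hα : α ∈ Set.Ioo (0 : ℝ) 1) (w : EuclideanSpace ℝ (Fin n))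
    (hsorted : ∀ i j : Fin S, i ≤ j → ⟪w, x i⟫ ≤ ⟪w, x j⟫)
    (k : ℕ) (hk : k < S)
    (hklt : ∑ j ∈ Finset.univ.filter (fun j : Fin S => (j : ℕ) < k), p j < α)
    (hkmax : ∀ m : ℕ, m < S →
      ∑ j ∈ Finset.univ.filter (fun j : Fin S => (j : ℕ) < m), p j < α → m ≤ k)
    (ε : ℝ) (hε : ε = α - ∑ j ∈ Finset.univ.filter (fun j : Fin S => (j : ℕ) < k), p j) :
    discreteCVaR x p α w =
      (1 / α) * ((∑ j ∈ Finset.univ.filter (fun j : Fin S => (j : ℕ) < k), p j * ⟪w, x j⟫) +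
        ε * ⟪w, x ⟨k, hk⟩⟫) := by
  obtain ⟨hα0, hα1⟩ := hα
  have hQ : α ≤ ∑ j ∈ Finset.univ.filter (fun j : Fin S => (j : ℕ) < k + 1), p j := by
    by_cases hkS : k + 1 < S
    · by_contra h
      have := hkmax (k + 1) hkS (lt_of_not_ge h)
      omega
    · have huniv : Finset.univ.filter (fun j : Fin S => (j : ℕ) < k + 1) = Finset.univ := by
        ext j
        simp only [Finset.mem_filter, Finset.mem_univ, true_and]
        have hS' : S ≤ k + 1 := by omega
        exact iff_true_intro (lt_of_lt_of_le j.isLt hS')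
      rw [huniv, hps]; linarith
  set kk : Fin S := ⟨k, hk⟩ with hkk
  set v : ℝ := ⟪w, x kk⟫ with hv
  set P : ℝ := ∑ j ∈ Finset.univ.filter (fun j : Fin S => (j : ℕ) < k), p j with hP
  have hle : ∀ j : Fin S, (j : ℕ) ≤ k → ⟪w, x j⟫ ≤ v := by
    intro j hj; exact hsorted j kk hj
  have hge : ∀ j : Fin S, k ≤ (j : ℕ) → v ≤ ⟪w, x j⟫ := by
    intro j hj; exact hsorted kk j hj
  set g : ℝ → ℝ := fun a => a + (1 / α) * ∑ j, p j * min (⟪w, x j⟫ - a) 0 with hg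
  have hgv : g v = (1 / α) * ((∑ j ∈ Finset.univ.filter
      (fun j : Fin S => (j : ℕ) < k), p j * ⟪w, x j⟫) + ε * v) := by
    have hsum : ∑ j, p j * min (⟪w, x j⟫ - v) 0
        = ∑ j ∈ Finset.univ.filter (fun j : Fin S => (j : ℕ) < k),
            (p j * ⟪w, x j⟫ - p j * v) := by
      rw [← Finset.sum_filter_add_sum_filter_not Finset.univ
        (fun j : Fin S => (j : ℕ) < k)]
      have h1 : ∑ j ∈ Finset.univ.filter (fun j : Fin S => ¬ (j : ℕ) < k),
          p j * min (⟪w, x j⟫ - v) 0 = 0 := by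
        apply Finset.sum_eq_zero
        intro j hj
        simp only [Finset.mem_filter] at hj
        have : v ≤ ⟪w, x j⟫ := hge j (by omega)
        rw [min_eq_right (by linarith)]
        ring
      rw [h1, add_zero]
      apply Finset.sum_congr rfl
      intro j hj
      simp only [Finset.mem_filter] at hj
      have : ⟪w, x j⟫ ≤ v := hle j (by omega)
      rw [min_eq_left (by linarith)]
      ring
    rw [hg]
    simp only [hsum, Finset.sum_sub_distrib, ← Finset.sum_mul, ← hP, hε, ← hP]
    field_simp
    ring
  have hgr : IsGreatest (Set.range g) (g v) := by
    constructor
    · exact ⟨v, rfl⟩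
    · rintro _ ⟨a, rfl⟩
      rcases le_total a v with hav | hav
      · have hterm : ∀ j ∈ Finset.univ, p j * min (⟪w, x j⟫ - a) 0 ≤
            p j * min (⟪w, x j⟫ - v) 0 +
              (if (j : ℕ) < k then (v - a) * p j else 0) := by
          intro j _
          by_cases hjk : (j : ℕ) < k
          · simp only [hjk, if_true]
            have h1 : ⟪w, x j⟫ ≤ v := hle j (by omega)
            rw [show min (⟪w, x j⟫ - v) 0 = ⟪w, x j⟫ - v from min_eq_left (by linarith)]
            have h2 := mul_le_mul_of_nonneg_left
              (min_le_left (⟪w, x j⟫ - a) (0:ℝ)) (hp j).le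
            linarith
          · simp only [hjk, if_false, add_zero]
            have h1 : v ≤ ⟪w, x j⟫ := hge j (by omega)
            rw [show min (⟪w, x j⟫ - v) 0 = 0 from min_eq_right (by linarith),
              show min (⟪w, x j⟫ - a) 0 = 0 from min_eq_right (by linarith)]
        have hsum := Finset.sum_le_sum hterm
        rw [Finset.sum_add_distrib] at hsum
        simp only [← Finset.sum_filter] at hsum
        have hsum2 : ∑ j ∈ Finset.univ.filter (fun j : Fin S => (j : ℕ) < k),
            (v - a) * p j = (v - a) * P := by
          rw [hP, Finset.mul_sum]
        rw [hsum2] at hsum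
        have h1α : 0 < 1 / α := by positivity
        have h3 : g a ≤ a + (1 / α) * ((∑ j, p j * min (⟪w, x j⟫ - v) 0) + (v - a) * P) := by
          rw [hg]
          simp only []
          linarith [mul_le_mul_of_nonneg_left hsum h1α.le]
        refine h3.trans ?_
        rw [hg]
        simp only []
        have hP0 : 0 ≤ P := by
          rw [hP]; exact Finset.sum_nonneg (fun j _ => (hp j).le)
        have h2 : (1 / α) * ((v - a) * P) ≤ v - a := by
          rw [div_mul_eq_mul_div, div_le_iff₀ hα0]
          nlinarith
        linarith [h2]
      · set Q : ℝ := ∑ j ∈ Finset.univ.filter (fun j : Fin S => (j : ℕ) < k + 1), p j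
          with hQdef
        have hterm : ∀ j ∈ Finset.univ, p j * min (⟪w, x j⟫ - a) 0 ≤
            p j * min (⟪w, x j⟫ - v) 0 +
              (if (j : ℕ) < k + 1 then (v - a) * p j else 0) := by
          intro j _
          by_cases hjk : (j : ℕ) < k + 1
          · simp only [hjk, if_true]
            have h1 : ⟪w, x j⟫ ≤ v := hle j (by omega)
            rw [show min (⟪w, x j⟫ - v) 0 = ⟪w, x j⟫ - v from min_eq_left (by linarith),
              show min (⟪w, x j⟫ - a) 0 = ⟪w, x j⟫ - a from min_eq_left (by linarith)]
            have : p j * (⟪w, x j⟫ - a) = p j * (⟪w, x j⟫ - v) + (v - a) * p j := by ring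
            linarith
          · simp only [hjk, if_false, add_zero]
            have h1 : v ≤ ⟪w, x j⟫ := hge j (by omega)
            rw [show min (⟪w, x j⟫ - v) 0 = 0 from min_eq_right (by linarith)]
            have h2 := mul_le_mul_of_nonneg_left
              (min_le_right (⟪w, x j⟫ - a) (0:ℝ)) (hp j).le
            linarith
        have hsum := Finset.sum_le_sum hterm
        rw [Finset.sum_add_distrib] at hsum
        simp only [← Finset.sum_filter] at hsum
        have hsum2 : ∑ j ∈ Finset.univ.filter (fun j : Fin S => (j : ℕ) < k + 1),
            (v - a) * p j = (v - a) * Q := by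
          rw [hQdef, Finset.mul_sum]
        rw [hsum2] at hsum
        have h1α : 0 < 1 / α := by positivity
        have h3 : g a ≤ a + (1 / α) * ((∑ j, p j * min (⟪w, x j⟫ - v) 0) + (v - a) * Q) := by
          rw [hg]
          simp only []
          linarith [mul_le_mul_of_nonneg_left hsum h1α.le]
        refine h3.trans ?_
        rw [hg]
        simp only []
        have h2 : (1 / α) * ((v - a) * Q) ≤ v - a := by
          rw [div_mul_eq_mul_div, div_le_iff₀ hα0]
          nlinarith
        linarith [h2]
  have : discreteCVaR x p α w = g v := by
    rw [discreteCVaR]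
    exact hgr.csSup_eq
  rw [this, hgv]
end

section
/- The function w ↦ CVaR_{X,α}(w) is concave on ℝⁿ. -/
open scoped RealInnerProductSpace

private lemma cvar_bddAbove {n S : ℕ} (x : Fin S → EuclideanSpace ℝ (Fin n))
    (p : Fin S → ℝ) (hp : ∀ j, 0 ≤ p j) (hps : ∑ j, p j = 1)
    {β : ℝ} (hβ0 : 0 < β) (hβ1 : β ≤ 1) (w : EuclideanSpace ℝ (Fin n)) :
    BddAbove (Set.range fun a : ℝ => a + (1 / β) * ∑ j, p j * min (⟪w, x j⟫ - a) 0) := by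
  refine ⟨max 0 ((1/β) * ∑ j, p j * ⟪w, x j⟫), ?_⟩
  rintro y ⟨a, rfl⟩
  have hβ' : (0:ℝ) < 1/β := by positivity
  rcases le_or_gt 0 a with ha | ha
  · have h1 : ∑ j, p j * min (⟪w, x j⟫ - a) 0 ≤ ∑ j, p j * (⟪w, x j⟫ - a) :=
      Finset.sum_le_sum fun j _ => mul_le_mul_of_nonneg_left (min_le_left _ _) (hp j)
    have h2 : ∑ j, p j * (⟪w, x j⟫ - a) = (∑ j, p j * ⟪w, x j⟫) - a := by
      simp only [mul_sub, Finset.sum_sub_distrib, ← Finset.sum_mul, hps, one_mul]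
    have h3 : a + (1/β) * ∑ j, p j * min (⟪w, x j⟫ - a) 0
        ≤ a + (1/β) * ((∑ j, p j * ⟪w, x j⟫) - a) := by nlinarith [h1]
    have hβ2 : 1 ≤ 1/β := by rw [le_div_iff₀ hβ0]; linarith
    have h4 : a + (1/β) * ((∑ j, p j * ⟪w, x j⟫) - a) ≤ (1/β) * ∑ j, p j * ⟪w, x j⟫ := by
      nlinarith
    exact le_trans (le_trans h3 h4) (le_max_right _ _)
  · have h1 : ∑ j, p j * min (⟪w, x j⟫ - a) 0 ≤ 0 :=
      Finset.sum_nonpos fun j _ => mul_nonpos_of_nonneg_of_nonpos (hp j) (min_le_right _ _)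
    have h2 : (1/β) * ∑ j, p j * min (⟪w, x j⟫ - a) 0 ≤ 0 :=
      mul_nonpos_of_nonneg_of_nonpos hβ'.le h1
    have := le_max_left (0:ℝ) ((1/β) * ∑ j, p j * ⟪w, x j⟫)
    linarith

/-- The discrete CVaR at level `α ∈ (0,1)` is a concave function of the
portfolio vector `w` on `ℝⁿ`. -/
theorem stmt_12 {n S : ℕ} (hS : 1 ≤ S)
    (x : Fin S → EuclideanSpace ℝ (Fin n)) (p : Fin S → ℝ)
    (hp : ∀ j, 0 < p j) (hps : ∑ j, p j = 1)
    (α : ℝ) (hα : α ∈ Set.Ioo (0 : ℝ) 1) :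
    ConcaveOn ℝ Set.univ (discreteCVaR x p α) := by
  obtain ⟨hα0, hα1⟩ := hα
  have hp' : ∀ j, 0 ≤ p j := fun j => (hp j).le
  set f : EuclideanSpace ℝ (Fin n) → ℝ → ℝ :=
    fun w a => a + (1/α) * ∑ j, p j * min (⟪w, x j⟫ - a) 0 with hf
  have hbdd : ∀ w, BddAbove (Set.range (f w)) := fun w =>
    cvar_bddAbove x p hp' hps hα0 hα1.le w
  have hne : ∀ w : EuclideanSpace ℝ (Fin n), (Set.range (f w)).Nonempty :=
    fun w => Set.range_nonempty _
  have hcvar : ∀ w, discreteCVaR x p α w = sSup (Set.range (f w)) := fun w => rfl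
  refine ⟨convex_univ, ?_⟩
  intro w₁ _ w₂ _ t s ht hs hts
  simp only [smul_eq_mul, Set.mem_univ]
  have hα' : (0:ℝ) ≤ 1/α := by positivity
  -- key joint concavity inequality
  have key : ∀ a₁ a₂ : ℝ,
      t * f w₁ a₁ + s * f w₂ a₂ ≤ f (t • w₁ + s • w₂) (t * a₁ + s * a₂) := by
    intro a₁ a₂
    have hsum : ∀ j, t * (p j * min (⟪w₁, x j⟫ - a₁) 0) + s * (p j * min (⟪w₂, x j⟫ - a₂) 0)
        ≤ p j * min (⟪t • w₁ + s • w₂, x j⟫ - (t * a₁ + s * a₂)) 0 := by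
      intro j
      have hinner : ⟪t • w₁ + s • w₂, x j⟫ = t * ⟪w₁, x j⟫ + s * ⟪w₂, x j⟫ := by
        rw [inner_add_left, real_inner_smul_left, real_inner_smul_left]
      have hmin : t * min (⟪w₁, x j⟫ - a₁) 0 + s * min (⟪w₂, x j⟫ - a₂) 0
          ≤ min (⟪t • w₁ + s • w₂, x j⟫ - (t * a₁ + s * a₂)) 0 := by
        rw [hinner]
        refine le_min ?_ ?_
        · have h1 : t * min (⟪w₁, x j⟫ - a₁) 0 ≤ t * (⟪w₁, x j⟫ - a₁) :=
            mul_le_mul_of_nonneg_left (min_le_left _ _) ht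
          have h2 : s * min (⟪w₂, x j⟫ - a₂) 0 ≤ s * (⟪w₂, x j⟫ - a₂) :=
            mul_le_mul_of_nonneg_left (min_le_left _ _) hs
          linarith
        · have h1 : t * min (⟪w₁, x j⟫ - a₁) 0 ≤ 0 :=
            mul_nonpos_of_nonneg_of_nonpos ht (min_le_right _ _)
          have h2 : s * min (⟪w₂, x j⟫ - a₂) 0 ≤ 0 :=
            mul_nonpos_of_nonneg_of_nonpos hs (min_le_right _ _)
          linarith
      calc t * (p j * min (⟪w₁, x j⟫ - a₁) 0) + s * (p j * min (⟪w₂, x j⟫ - a₂) 0)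
          = p j * (t * min (⟪w₁, x j⟫ - a₁) 0 + s * min (⟪w₂, x j⟫ - a₂) 0) := by ring
        _ ≤ p j * min (⟪t • w₁ + s • w₂, x j⟫ - (t * a₁ + s * a₂)) 0 :=
            mul_le_mul_of_nonneg_left hmin (hp' j)
    have hsums : ∑ j, (t * (p j * min (⟪w₁, x j⟫ - a₁) 0) + s * (p j * min (⟪w₂, x j⟫ - a₂) 0))
        ≤ ∑ j, p j * min (⟪t • w₁ + s • w₂, x j⟫ - (t * a₁ + s * a₂)) 0 :=
      Finset.sum_le_sum fun j _ => hsum j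
    simp only [hf]
    rw [Finset.sum_add_distrib, ← Finset.mul_sum, ← Finset.mul_sum] at hsums
    nlinarith [hsums]
  have key' : ∀ a₁ a₂ : ℝ,
      t * f w₁ a₁ + s * f w₂ a₂ ≤ discreteCVaR x p α (t • w₁ + s • w₂) := by
    intro a₁ a₂
    exact le_trans (key a₁ a₂)
      (le_csSup (hbdd _) ⟨t * a₁ + s * a₂, rfl⟩)
  rcases eq_or_lt_of_le ht with ht0 | ht0
  · have hs1 : s = 1 := by linarith
    simp [← ht0, hs1]
  rcases eq_or_lt_of_le hs with hs0 | hs0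
  · have ht1 : t = 1 := by linarith
    simp [← hs0, ht1]
  -- both positive
  rw [hcvar w₁, hcvar w₂]
  have h1 : sSup (Set.range (f w₁)) ≤
      (discreteCVaR x p α (t • w₁ + s • w₂) - s * sSup (Set.range (f w₂))) / t := by
    refine csSup_le (hne w₁) ?_
    rintro y ⟨a₁, rfl⟩
    rw [le_div_iff₀ ht0]
    have h2 : sSup (Set.range (f w₂)) ≤
        (discreteCVaR x p α (t • w₁ + s • w₂) - t * f w₁ a₁) / s := by
      refine csSup_le (hne w₂) ?_
      rintro y ⟨a₂, rfl⟩
      rw [le_div_iff₀ hs0]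
      have := key' a₁ a₂
      nlinarith
    rw [le_div_iff₀ hs0] at h2
    nlinarith
  rw [le_div_iff₀ ht0] at h1
  nlinarith
end

section
/- Let w ∈ ℝⁿ, assume the scenarios are indexed so that wᵀx₁ ≤ wᵀx₂ ≤ … ≤ wᵀx_S, let k be the largest integer in {0,…,S−1} with Σ_{j=1}^k p_j < α (the empty sum being 0), and set ε := α − Σ_{j=1}^k p_j. Then for every γ with 0 < γ < ε the following hold: (i) k is also the largest integer with Σ_{j=1}^k p_j < α − γ, and the corresponding boundary weight at level α − γ equals ε − γ; and (ii) (α/γ)·CVaR_{X,α}(w) − ((α−γ)/γ)·CVaR_{X,α−γ}(w) = wᵀx_{k+1}, i.e. this difference-of-concave combination of CVaRs equals the discrete Value-at-Risk of w at level α. -/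
/-!
For `β > 0` the CVaR is the supremum of the Rockafellar–Uryasev function
`a ↦ a + β⁻¹ Σⱼ pⱼ min(vⱼ - a, 0)` with `vⱼ = ⟪w, xⱼ⟫`. Its slope at `a` is
`1 - β⁻¹ Σ_{vⱼ < a} pⱼ`, so it is maximal at any `t` with `Σ_{vⱼ < t} pⱼ ≤ β ≤ Σ_{vⱼ ≤ t} pⱼ`.
With sorted scenarios, `⟪w, x_k⟫` is such a point for both levels `α` and `α - γ`, because
`Σ_{j<k} pⱼ < α - γ < α ≤ Σ_{j≤k} pⱼ`. Writing `C = Σⱼ pⱼ min(⟪w, xⱼ⟫ - ⟪w, x_k⟫, 0)`, both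
CVaRs are `⟪w, x_k⟫ + C / level`, and the combination `(α/γ)·(·) - ((α-γ)/γ)·(·)` cancels `C`.
-/

open scoped RealInnerProductSpace

open Finset

section RockafellarUryasev

variable {ι : Type*} [Fintype ι]

noncomputable def cvarObjective (v p : ι → ℝ) (β a : ℝ) : ℝ :=
  a + (1 / β) * ∑ j, p j * min (v j - a) 0

lemma sub_le_min_sub_sub_min_sub {y a t : ℝ} (h : a ≤ t ∨ y ≤ t) :
    a - t ≤ min (y - t) 0 - min (y - a) 0 := by
  rcases h with h | h <;> simp only [min_def] <;> split_ifs <;> linarith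

lemma min_sub_sub_min_sub_nonneg {y a t : ℝ} (h : t ≤ y) :
    0 ≤ min (y - t) 0 - min (y - a) 0 := by
  simp only [min_def]; split_ifs <;> linarith

variable {v p : ι → ℝ} {β t : ℝ}

lemma mul_sub_le_sum_mul_min_sub (hp : ∀ j, 0 ≤ p j)
    (hL : ∑ j with v j < t, p j ≤ β) (hU : β ≤ ∑ j with v j ≤ t, p j) (a : ℝ) :
    β * (a - t) ≤ ∑ j, p j * (min (v j - t) 0 - min (v j - a) 0) := by
  have gap_nonneg : ∀ j, t ≤ v j → 0 ≤ p j * (min (v j - t) 0 - min (v j - a) 0) :=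
    fun j hj => mul_nonneg (hp j) (min_sub_sub_min_sub_nonneg hj)
  rcases le_total a t with hat | hta
  · calc β * (a - t) ≤ (∑ j with v j < t, p j) * (a - t) :=
          mul_le_mul_of_nonpos_right hL (by linarith)
      _ = ∑ j, if v j < t then p j * (a - t) else 0 := by rw [sum_mul, sum_filter]
      _ ≤ _ := sum_le_sum fun j _ => by
          split_ifs with hj
          · exact mul_le_mul_of_nonneg_left (sub_le_min_sub_sub_min_sub (.inl hat)) (hp j)
          · exact gap_nonneg j (not_lt.1 hj)
  · calc β * (a - t) ≤ (∑ j with v j ≤ t, p j) * (a - t) :=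
          mul_le_mul_of_nonneg_right hU (by linarith)
      _ = ∑ j, if v j ≤ t then p j * (a - t) else 0 := by rw [sum_mul, sum_filter]
      _ ≤ _ := sum_le_sum fun j _ => by
          split_ifs with hj
          · exact mul_le_mul_of_nonneg_left (sub_le_min_sub_sub_min_sub (.inr hj)) (hp j)
          · exact gap_nonneg j (not_le.1 hj).le

lemma cvarObjective_le_of_isQuantile (hp : ∀ j, 0 ≤ p j) (hβ : 0 < β)
    (hL : ∑ j with v j < t, p j ≤ β) (hU : β ≤ ∑ j with v j ≤ t, p j) (a : ℝ) :
    cvarObjective v p β a ≤ cvarObjective v p β t := by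
  have h := (le_div_iff₀' hβ).2 (mul_sub_le_sum_mul_min_sub hp hL hU a)
  simp only [mul_sub, sum_sub_distrib, sub_div] at h
  simp only [cvarObjective, one_div_mul_eq_div]
  linarith

lemma sSup_range_cvarObjective (hp : ∀ j, 0 ≤ p j) (hβ : 0 < β)
    (hL : ∑ j with v j < t, p j ≤ β) (hU : β ≤ ∑ j with v j ≤ t, p j) :
    sSup (Set.range (cvarObjective v p β)) = cvarObjective v p β t :=
  IsGreatest.csSup_eq
    ⟨⟨t, rfl⟩, Set.forall_mem_range.2 (cvarObjective_le_of_isQuantile hp hβ hL hU)⟩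

end RockafellarUryasev

lemma discreteCVaR_eq_cvarObjective {n S : ℕ} {x : Fin S → EuclideanSpace ℝ (Fin n)}
    {p : Fin S → ℝ} (hp : ∀ j, 0 ≤ p j) {w : EuclideanSpace ℝ (Fin n)}
    (hsorted : Monotone fun j => ⟪w, x j⟫) {k : ℕ} (hk : k < S) {β : ℝ} (hβ : 0 < β)
    (hL : ∑ j ∈ univ.filter (fun j : Fin S => (j : ℕ) < k), p j ≤ β)
    (hU : β ≤ ∑ j ∈ univ.filter (fun j : Fin S => (j : ℕ) < k + 1), p j) :
    discreteCVaR x p β w = cvarObjective (fun j => ⟪w, x j⟫) p β ⟪w, x ⟨k, hk⟩⟫ := by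
  refine sSup_range_cvarObjective hp hβ ?_ ?_
  · refine le_trans (sum_le_sum_of_subset_of_nonneg ?_ fun j _ _ => hp j) hL
    intro j
    simp only [mem_filter, mem_univ, true_and]
    exact fun hj => not_le.1 fun hkj => (hsorted (show (⟨k, hk⟩ : Fin S) ≤ j from hkj)).not_gt hj
  · refine hU.trans (sum_le_sum_of_subset_of_nonneg ?_ fun j _ _ => hp j)
    intro j
    simp only [mem_filter, mem_univ, true_and]
    exact fun hj => hsorted (show j ≤ (⟨k, hk⟩ : Fin S) from Nat.lt_succ_iff.1 hj)

theorem stmt_13_general {n S : ℕ}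
    (x : Fin S → EuclideanSpace ℝ (Fin n)) (p : Fin S → ℝ)
    (hp : ∀ j, 0 < p j) (hps : ∑ j, p j = 1)
    (α : ℝ) (hα : α ∈ Set.Ioo (0 : ℝ) 1) (w : EuclideanSpace ℝ (Fin n))
    (hsorted : ∀ i j : Fin S, i ≤ j → ⟪w, x i⟫ ≤ ⟪w, x j⟫)
    (k : ℕ) (hk : k < S)
    (hkmax : ∀ m : ℕ, m < S →
      ∑ j ∈ Finset.univ.filter (fun j : Fin S => (j : ℕ) < m), p j < α → m ≤ k)
    (ε : ℝ) (hε : ε = α - ∑ j ∈ Finset.univ.filter (fun j : Fin S => (j : ℕ) < k), p j)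
    (γ : ℝ) (hγ : 0 < γ) (hγε : γ < ε) :
    ((∑ j ∈ Finset.univ.filter (fun j : Fin S => (j : ℕ) < k), p j < α - γ) ∧
     (∀ m : ℕ, m < S →
       ∑ j ∈ Finset.univ.filter (fun j : Fin S => (j : ℕ) < m), p j < α - γ → m ≤ k) ∧
     (α - γ) - ∑ j ∈ Finset.univ.filter (fun j : Fin S => (j : ℕ) < k), p j = ε - γ) ∧
    (α / γ) * discreteCVaR x p α w - ((α - γ) / γ) * discreteCVaR x p (α - γ) w =
      ⟪w, x ⟨k, hk⟩⟫ := by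
  have hp₀ : ∀ j, 0 ≤ p j := fun j => (hp j).le
  have hsum_nonneg : 0 ≤ ∑ j ∈ univ.filter (fun j : Fin S => (j : ℕ) < k), p j :=
    sum_nonneg fun j _ => hp₀ j
  have hsum_lt : ∑ j ∈ univ.filter (fun j : Fin S => (j : ℕ) < k), p j < α - γ := by linarith
  have hα_le_sum : α ≤ ∑ j ∈ univ.filter (fun j : Fin S => (j : ℕ) < k + 1), p j := by
    by_contra! h
    rcases (Nat.succ_le_of_lt hk).lt_or_eq with hkS | rfl
    · exact (hkmax (k + 1) hkS h).not_gt k.lt_succ_self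
    · rw [filter_true_of_mem fun j _ => j.isLt, hps] at h
      exact hα.2.not_ge h.le
  refine ⟨⟨hsum_lt, fun m hm hsum => hkmax m hm (by linarith), by rw [hε]; ring⟩, ?_⟩
  rw [discreteCVaR_eq_cvarObjective hp₀ hsorted hk (by linarith) hsum_lt.le (by linarith),
    discreteCVaR_eq_cvarObjective hp₀ hsorted hk (by linarith) (by linarith) hα_le_sum]
  unfold cvarObjective
  have : α ≠ 0 := by linarith
  have : α - γ ≠ 0 := by linarith
  field_simp
  ring

/-- With sorted scenarios, `k` the largest admissible index at level `α`,
`ε` the boundary weight and `0 < γ < ε`: (i) `k` is also the largest admissible index at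
level `α − γ`, with boundary weight `ε − γ`; (ii) the DC combination
`(α/γ)·CVaR_{X,α}(w) − ((α−γ)/γ)·CVaR_{X,α−γ}(w)` equals `wᵀx_{k+1}`, the discrete VaR
(indexed by `k` in 0-based notation). -/
theorem stmt_13 {n S : ℕ} (hS : 1 ≤ S)
    (x : Fin S → EuclideanSpace ℝ (Fin n)) (p : Fin S → ℝ)
    (hp : ∀ j, 0 < p j) (hps : ∑ j, p j = 1)
    (α : ℝ) (hα : α ∈ Set.Ioo (0 : ℝ) 1) (w : EuclideanSpace ℝ (Fin n))
    (hsorted : ∀ i j : Fin S, i ≤ j → ⟪w, x i⟫ ≤ ⟪w, x j⟫)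
    (k : ℕ) (hk : k < S)
    (hklt : ∑ j ∈ Finset.univ.filter (fun j : Fin S => (j : ℕ) < k), p j < α)
    (hkmax : ∀ m : ℕ, m < S →
      ∑ j ∈ Finset.univ.filter (fun j : Fin S => (j : ℕ) < m), p j < α → m ≤ k)
    (ε : ℝ) (hε : ε = α - ∑ j ∈ Finset.univ.filter (fun j : Fin S => (j : ℕ) < k), p j)
    (γ : ℝ) (hγ : 0 < γ) (hγε : γ < ε) :
    ((∑ j ∈ Finset.univ.filter (fun j : Fin S => (j : ℕ) < k), p j < α - γ) ∧
     (∀ m : ℕ, m < S →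
       ∑ j ∈ Finset.univ.filter (fun j : Fin S => (j : ℕ) < m), p j < α - γ → m ≤ k) ∧
     (α - γ) - ∑ j ∈ Finset.univ.filter (fun j : Fin S => (j : ℕ) < k), p j = ε - γ) ∧
    (α / γ) * discreteCVaR x p α w - ((α - γ) / γ) * discreteCVaR x p (α - γ) w =
      ⟪w, x ⟨k, hk⟩⟫ :=
  stmt_13_general x p hp hps α hα w hsorted k hk hkmax ε hε γ hγ hγε
end

section
/- Let w ∈ ℝⁿ, assume the scenarios are indexed so that wᵀx₁ ≤ wᵀx₂ ≤ … ≤ wᵀx_S, let k be the largest integer in {0,…,S−1} with Σ_{j=1}^k p_j < α (the empty sum being 0), set ε := α − Σ_{j=1}^k p_j, and let 0 < γ < ε and r_min ∈ ℝ. Then (α/γ)·CVaR_{X,α}(w) − r_min = ((α−γ)/γ)·CVaR_{X,α−γ}(w) holds if and only if wᵀx_{k+1} = r_min, i.e., if and only if the discrete Value-at-Risk of w at level α equals r_min. -/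
open scoped RealInnerProductSpace

private lemma min_mono_sub (t b c : ℝ) (h : b ≤ c) : min (t - c) 0 ≤ min (t - b) 0 := by
  rcases min_cases (t - c) 0 with ⟨h1, h2⟩ | ⟨h1, h2⟩ <;>
    rcases min_cases (t - b) 0 with ⟨h3, h4⟩ | ⟨h3, h4⟩ <;> linarith

private lemma min_sub_le' (t b c : ℝ) (h : b ≤ c) : min (t - b) 0 ≤ min (t - c) 0 + (c - b) := by
  rcases min_cases (t - c) 0 with ⟨h1, h2⟩ | ⟨h1, h2⟩ <;>
    rcases min_cases (t - b) 0 with ⟨h3, h4⟩ | ⟨h3, h4⟩ <;> linarith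

/-- key: value of the CVaR sup. -/
private lemma cvar_eq {S : ℕ} (v p : Fin S → ℝ) (hp : ∀ j, 0 < p j)
    (hmono : ∀ i j : Fin S, i ≤ j → v i ≤ v j) (k : Fin S) (β : ℝ) (hβ : 0 < β)
    (h1 : ∑ j ∈ Finset.univ.filter (fun j : Fin S => (j : ℕ) < (k : ℕ)), p j < β)
    (h2 : β ≤ ∑ j ∈ Finset.univ.filter (fun j : Fin S => (j : ℕ) < (k : ℕ) + 1), p j) :
    sSup (Set.range fun a : ℝ => a + (1 / β) * ∑ j, p j * min (v j - a) 0)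
      = v k + (1 / β) * ∑ j, p j * min (v j - v k) 0 := by
  apply IsGreatest.csSup_eq
  constructor
  · exact ⟨v k, rfl⟩
  · rintro _ ⟨a, rfl⟩
    dsimp only
    rcases le_total a (v k) with hav | hav
    · -- need: Σ p_j (min(v_j−a,0) − min(v_j−v_k,0)) ≤ β (v_k − a)
      have key : ∑ j, p j * (min (v j - a) 0 - min (v j - v k) 0) ≤ β * (v k - a) := by
        have hzero : ∀ j ∈ Finset.univ,
            j ∉ Finset.univ.filter (fun j : Fin S => (j : ℕ) < (k : ℕ)) →
            p j * (min (v j - a) 0 - min (v j - v k) 0) = 0 := by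
          intro j _ hj
          simp only [Finset.mem_filter, Finset.mem_univ, true_and, not_lt] at hj
          have hkj : k ≤ j := by exact_mod_cast hj
          have : v k ≤ v j := hmono k j hkj
          have e1 : min (v j - a) 0 = 0 := min_eq_right (by linarith)
          have e2 : min (v j - v k) 0 = 0 := min_eq_right (by linarith)
          rw [e1, e2]; ring
        rw [← Finset.sum_subset (Finset.filter_subset _ _) hzero]
        calc ∑ j ∈ Finset.univ.filter (fun j : Fin S => (j : ℕ) < (k : ℕ)),
              p j * (min (v j - a) 0 - min (v j - v k) 0)
            ≤ ∑ j ∈ Finset.univ.filter (fun j : Fin S => (j : ℕ) < (k : ℕ)),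
              p j * (v k - a) := by
              apply Finset.sum_le_sum
              intro j _
              have := min_sub_le' (v j) a (v k) hav
              have := (hp j).le
              nlinarith [min_sub_le' (v j) a (v k) hav, (hp j).le]
          _ = (∑ j ∈ Finset.univ.filter (fun j : Fin S => (j : ℕ) < (k : ℕ)), p j)
                * (v k - a) := by rw [← Finset.sum_mul]
          _ ≤ β * (v k - a) := by nlinarith [h1]
      have expand : ∑ j, p j * (min (v j - a) 0 - min (v j - v k) 0)
          = (∑ j, p j * min (v j - a) 0) - ∑ j, p j * min (v j - v k) 0 := by
        rw [← Finset.sum_sub_distrib]; congr 1; ext j; ring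
      rw [expand] at key
      have hβ' : (0:ℝ) < 1 / β := by positivity
      have key2 := mul_le_mul_of_nonneg_left key hβ'.le
      have hcan : (1 / β) * (β * (v k - a)) = v k - a := by field_simp
      rw [hcan, mul_sub] at key2
      linarith
    · -- v k ≤ a : need β (a − v_k) ≤ Σ p_j (min(v_j−v_k,0) − min(v_j−a,0))
      have key : β * (a - v k) ≤ ∑ j, p j * (min (v j - v k) 0 - min (v j - a) 0) := by
        have step1 : β * (a - v k)
            ≤ (∑ j ∈ Finset.univ.filter (fun j : Fin S => (j : ℕ) < (k : ℕ) + 1), p j)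
              * (a - v k) := by nlinarith [h2]
        have step2 : (∑ j ∈ Finset.univ.filter (fun j : Fin S => (j : ℕ) < (k : ℕ) + 1), p j)
              * (a - v k)
            = ∑ j ∈ Finset.univ.filter (fun j : Fin S => (j : ℕ) < (k : ℕ) + 1),
                p j * (a - v k) := by rw [← Finset.sum_mul]
        have step3 : ∑ j ∈ Finset.univ.filter (fun j : Fin S => (j : ℕ) < (k : ℕ) + 1),
                p j * (a - v k)
            ≤ ∑ j ∈ Finset.univ.filter (fun j : Fin S => (j : ℕ) < (k : ℕ) + 1),
                p j * (min (v j - v k) 0 - min (v j - a) 0) := by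
          apply Finset.sum_le_sum
          intro j hj
          simp only [Finset.mem_filter, Finset.mem_univ, true_and] at hj
          have hjk : j ≤ k := by
            have : (j : ℕ) ≤ (k : ℕ) := Nat.lt_succ_iff.mp hj
            exact_mod_cast this
          have hvjk : v j ≤ v k := hmono j k hjk
          have e1 : min (v j - v k) 0 = v j - v k := min_eq_left (by linarith)
          have e2 : min (v j - a) 0 = v j - a := min_eq_left (by linarith)
          rw [e1, e2]
          have := (hp j).le
          nlinarith
        have step4 : ∑ j ∈ Finset.univ.filter (fun j : Fin S => (j : ℕ) < (k : ℕ) + 1),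
                p j * (min (v j - v k) 0 - min (v j - a) 0)
            ≤ ∑ j, p j * (min (v j - v k) 0 - min (v j - a) 0) := by
          apply Finset.sum_le_sum_of_subset_of_nonneg (Finset.filter_subset _ _)
          intro j _ _
          have := min_mono_sub (v j) (v k) a hav
          nlinarith [(hp j).le]
        linarith
      have expand : ∑ j, p j * (min (v j - v k) 0 - min (v j - a) 0)
          = (∑ j, p j * min (v j - v k) 0) - ∑ j, p j * min (v j - a) 0 := by
        rw [← Finset.sum_sub_distrib]; congr 1; ext j; ring
      rw [expand] at key
      have hβ' : (0:ℝ) < 1 / β := by positivity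
      have key2 := mul_le_mul_of_nonneg_left key hβ'.le
      have hcan : (1 / β) * (β * (a - v k)) = a - v k := by field_simp
      rw [hcan, mul_sub] at key2
      linarith

/-- With sorted scenarios, `k` the largest admissible index, boundary weight
`ε` and `0 < γ < ε`:
`(α/γ)·CVaR_{X,α}(w) − r_min = ((α−γ)/γ)·CVaR_{X,α−γ}(w)` holds if and only if
`wᵀx_{k+1} = r_min`, i.e. iff the discrete VaR of `w` at level `α` equals `r_min`
(boundary scenario indexed by `k` in 0-based notation). -/
theorem stmt_17 {n S : ℕ} (hS : 1 ≤ S)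
    (x : Fin S → EuclideanSpace ℝ (Fin n)) (p : Fin S → ℝ)
    (hp : ∀ j, 0 < p j) (hps : ∑ j, p j = 1)
    (α : ℝ) (hα : α ∈ Set.Ioo (0 : ℝ) 1) (w : EuclideanSpace ℝ (Fin n))
    (hsorted : ∀ i j : Fin S, i ≤ j → ⟪w, x i⟫ ≤ ⟪w, x j⟫)
    (k : ℕ) (hk : k < S)
    (hklt : ∑ j ∈ Finset.univ.filter (fun j : Fin S => (j : ℕ) < k), p j < α)
    (hkmax : ∀ m : ℕ, m < S →
      ∑ j ∈ Finset.univ.filter (fun j : Fin S => (j : ℕ) < m), p j < α → m ≤ k)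
    (ε : ℝ) (hε : ε = α - ∑ j ∈ Finset.univ.filter (fun j : Fin S => (j : ℕ) < k), p j)
    (γ : ℝ) (hγ : 0 < γ) (hγε : γ < ε) (rmin : ℝ) :
    (α / γ) * discreteCVaR x p α w - rmin = ((α - γ) / γ) * discreteCVaR x p (α - γ) w ↔
      ⟪w, x ⟨k, hk⟩⟫ = rmin := by
  obtain ⟨hα0, hα1⟩ := hα
  set K : Fin S := ⟨k, hk⟩ with hK
  set v : Fin S → ℝ := fun j => ⟪w, x j⟫ with hv
  have hKk : (K : ℕ) = k := rfl
  -- partial sum nonneg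
  have hsum_nonneg : 0 ≤ ∑ j ∈ Finset.univ.filter (fun j : Fin S => (j : ℕ) < k), p j :=
    Finset.sum_nonneg fun j _ => (hp j).le
  have hαγ : 0 < α - γ := by
    have : γ < α - ∑ j ∈ Finset.univ.filter (fun j : Fin S => (j : ℕ) < k), p j := hε ▸ hγε
    linarith
  -- upper bound on partial sum up to k+1
  have h2 : α ≤ ∑ j ∈ Finset.univ.filter (fun j : Fin S => (j : ℕ) < k + 1), p j := by
    by_cases hkS : k + 1 < S
    · by_contra hcon
      push_neg at hcon
      have := hkmax (k + 1) hkS hcon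
      omega
    · have hkS' : k + 1 = S := by omega
      have : Finset.univ.filter (fun j : Fin S => (j : ℕ) < k + 1) = Finset.univ := by
        ext j; simp [hkS', j.isLt]
      rw [this, hps]; linarith
  have h1γ : ∑ j ∈ Finset.univ.filter (fun j : Fin S => (j : ℕ) < k), p j < α - γ := by
    have : γ < α - ∑ j ∈ Finset.univ.filter (fun j : Fin S => (j : ℕ) < k), p j := hε ▸ hγε
    linarith
  have hmono : ∀ i j : Fin S, i ≤ j → v i ≤ v j := hsorted
  have e1 : discreteCVaR x p α w = v K + (1 / α) * ∑ j, p j * min (v j - v K) 0 := by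
    unfold discreteCVaR
    exact cvar_eq v p hp hmono K α hα0 (by simpa [hKk] using hklt) (by simpa [hKk] using h2)
  have e2 : discreteCVaR x p (α - γ) w
      = v K + (1 / (α - γ)) * ∑ j, p j * min (v j - v K) 0 := by
    unfold discreteCVaR
    exact cvar_eq v p hp hmono K (α - γ) hαγ (by simpa [hKk] using h1γ)
      (by
        have h2γ : α - γ ≤ ∑ j ∈ Finset.univ.filter (fun j : Fin S => (j : ℕ) < k + 1), p j :=
          by linarith
        simpa [hKk] using h2γ)
  rw [e1, e2]
  set A : ℝ := ∑ j, p j * min (v j - v K) 0 with hA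
  have hcalc : (α / γ) * (v K + (1 / α) * A) - ((α - γ) / γ) * (v K + (1 / (α - γ)) * A)
      = v K := by
    field_simp
    ring
  constructor
  · intro h; linarith
  · intro h; linarith
end
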